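/- arXiv:math/0102068 — 3 statements merged into one kernel-verified Lean document; each statement's English description precedes it below -/
import Mathlib

section
/- Let p be a prime and G a profinite group with a decreasing sequence (G_i)_{i≥0} of open normal subgroups such that G_0 = G, ⋂_{i≥0} G_i = {1}, and [G_{i−1} : G_i] = p for every i ≥ 1. Let a_i ∈ G_{i−1} ∖ G_i for every i ≥ 1. Then for every k ≥ 0 the smallest closed subgroup of G containing {a_i : i > k} is exactly G_k; in particular the elements a_i topologically generate G. -/
/-!
Since `[G_{i-1} : G_i] = p` is prime, no subgroup lies strictly between `G_i` and `G_{i-1}`,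
so `G_{i-1} = ⟨a_i⟩ G_i`; iterating, `G_k = ⟨a_i : i > k⟩ G_n` for every `n ≥ k`.
By compactness the `G_n` form a neighbourhood basis of `1`, so every element of `G_k` is a
limit of elements of `⟨a_i : i > k⟩`.
-/

open Topology

namespace Subgroup

variable {G : Type*} [Group G]

theorem eq_or_eq_of_relIndex_prime {H K L : Subgroup G} (hHK : H ≤ K) (hKL : K ≤ L)
    (hp : (H.relIndex L).Prime) : K = H ∨ K = L := by
  rw [← relIndex_mul_relIndex H K L hHK hKL, Nat.prime_mul_iff] at hp
  rcases hp with ⟨-, hKL'⟩ | ⟨-, hHK'⟩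
  · exact Or.inr (le_antisymm hKL (relIndex_eq_one.mp hKL'))
  · exact Or.inl (le_antisymm (relIndex_eq_one.mp hHK') hHK)

theorem closure_singleton_sup_eq_of_relIndex_prime {H L : Subgroup G} (hHL : H ≤ L)
    (hp : (H.relIndex L).Prime) {x : G} (hxL : x ∈ L) (hxH : x ∉ H) :
    closure {x} ⊔ H = L := by
  have hK : closure {x} ⊔ H ≤ L := sup_le ((closure_le _).mpr (by simpa using hxL)) hHL
  refine (eq_or_eq_of_relIndex_prime le_sup_right hK hp).resolve_left fun h => hxH ?_
  exact h ▸ mem_sup_left (subset_closure rfl)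

theorem le_closure_sup_of_le_closure_singleton_sup {C : ℕ → Subgroup G} {a : ℕ → G}
    (hstep : ∀ i, C i ≤ closure {a (i + 1)} ⊔ C (i + 1)) (k n : ℕ) :
    C k ≤ closure {x | ∃ i, k < i ∧ x = a i} ⊔ C (k + n) := by
  induction n with
  | zero => exact le_sup_right
  | succ n ih =>
    have ha : closure {a (k + n + 1)} ≤ closure {x | ∃ i, k < i ∧ x = a i} :=
      closure_mono (by simpa using ⟨k + n + 1, by omega, rfl⟩)
    exact ih.trans (sup_le le_sup_left
      ((hstep (k + n)).trans (sup_le_sup_right ha _)))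

variable [TopologicalSpace G]

theorem exists_coe_subset_of_mem_nhds_one [CompactSpace G] {ι : Type*} [Nonempty ι]
    {C : ι → Subgroup G} (hdir : Directed (· ≥ ·) C) (hclosed : ∀ i, IsClosed (C i : Set G))
    (hinter : ⨅ i, C i = ⊥) {U : Set G} (hU : U ∈ 𝓝 1) : ∃ i, (C i : Set G) ⊆ U := by
  refine exists_subset_nhds_of_isCompact' (hdir.mono_comp _ fun _ _ h => h)
    (fun i => (hclosed i).isCompact) hclosed fun x hx => ?_
  have hx1 : x ∈ ⨅ i, C i := by simpa [mem_iInf] using hx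
  rw [hinter, mem_bot] at hx1
  exact hx1 ▸ hU

variable [IsTopologicalGroup G]

theorem mem_topologicalClosure_of_forall_mem_sup {ι : Type*} {S : Subgroup G}
    {N : ι → Subgroup G} [∀ i, (N i).Normal] (hN : ∀ U ∈ 𝓝 (1 : G), ∃ i, (N i : Set G) ⊆ U)
    {g : G} (hg : ∀ i, g ∈ S ⊔ N i) : g ∈ S.topologicalClosure := by
  rw [← SetLike.mem_coe, topologicalClosure_coe, mem_closure_iff_nhds_one]
  intro U hU
  obtain ⟨i, hi⟩ := hN U hU
  obtain ⟨c, hc, s, hs, rfl⟩ := (normal_mul (N i) S).subset (sup_comm S (N i) ▸ hg i)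
  exact ⟨s, hs, (div_mul_cancel_right s c).symm ▸ hi (inv_mem hc)⟩

end Subgroup

theorem pc_generators_tail_topologically_generate_general
    (p : ℕ) (hp : p.Prime) (G : Type*) [Group G] [TopologicalSpace G]
    [IsTopologicalGroup G] [CompactSpace G]
    (C : ℕ → Subgroup G)
    (hdec : ∀ i, C (i + 1) ≤ C i)
    (hopen : ∀ i, IsOpen (C i : Set G))
    (hnormal : ∀ i, (C i).Normal)
    (hinter : ⨅ i, C i = ⊥)
    (hindex : ∀ i, 1 ≤ i → (C i).relIndex (C (i - 1)) = p)
    (a : ℕ → G)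
    (hmem : ∀ i, 1 ≤ i → a i ∈ C (i - 1))
    (hnotmem : ∀ i, 1 ≤ i → a i ∉ C i) :
    ∀ k : ℕ, (Subgroup.closure {x : G | ∃ i, k < i ∧ x = a i}).topologicalClosure = C k := by
  have hanti : Antitone C := antitone_nat_of_succ_le hdec
  have hclosed i : IsClosed (C i : Set G) := (C i).isClosed_of_isOpen (hopen i)
  have hstep i : C i ≤ Subgroup.closure {a (i + 1)} ⊔ C (i + 1) :=
    (Subgroup.closure_singleton_sup_eq_of_relIndex_prime (hdec i)
      (hindex (i + 1) (by omega) ▸ hp) (hmem (i + 1) (by omega)) (hnotmem (i + 1) (by omega))).ge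
  intro k
  refine le_antisymm (Subgroup.topologicalClosure_minimal _ ?_ (hclosed k)) fun g hg => ?_
  · rw [Subgroup.closure_le]
    rintro x ⟨i, hki, rfl⟩
    exact hanti (by omega) (hmem i (by omega))
  · refine Subgroup.mem_topologicalClosure_of_forall_mem_sup
      (fun U => Subgroup.exists_coe_subset_of_mem_nhds_one hanti.directed_ge hclosed hinter)
      fun n => ?_
    exact sup_le_sup_left (hanti (Nat.le_add_left n k)) _
      (Subgroup.le_closure_sup_of_le_closure_singleton_sup hstep k n hg)

/-- PC-generators of a pro-`p` chain: if `(G_i)` is a decreasing chain of open normal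
subgroups of a profinite group `G` with `G_0 = G`, trivial intersection and each step of
index `p`, and `a_i ∈ G_{i-1} \ G_i`, then the smallest closed subgroup containing
`{a_i : i > k}` is `G_k`; in particular the `a_i` topologically generate `G`. -/
theorem pc_generators_tail_topologically_generate
    (p : ℕ) (hp : p.Prime) (G : Type*) [Group G] [TopologicalSpace G]
    [IsTopologicalGroup G] [CompactSpace G] [T2Space G] [TotallyDisconnectedSpace G]
    (C : ℕ → Subgroup G)
    (hdec : ∀ i, C (i + 1) ≤ C i)
    (hopen : ∀ i, IsOpen (C i : Set G))
    (hnormal : ∀ i, (C i).Normal)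
    (h0 : C 0 = ⊤)
    (hinter : ⨅ i, C i = ⊥)
    (hindex : ∀ i, 1 ≤ i → (C i).relIndex (C (i - 1)) = p)
    (a : ℕ → G)
    (hmem : ∀ i, 1 ≤ i → a i ∈ C (i - 1))
    (hnotmem : ∀ i, 1 ≤ i → a i ∉ C i) :
    ∀ k : ℕ, (Subgroup.closure {x : G | ∃ i, k < i ∧ x = a i}).topologicalClosure = C k :=
  pc_generators_tail_topologically_generate_general p hp G C hdec hopen hnormal hinter hindex a hmem
    hnotmem
end

section
/- Let p be an odd prime, R a commutative ring, and σ, τ ring automorphisms of R with στ = τσ and σ^p = τ^p = id. Let λ, μ ∈ R satisfy σ(λ) = λ, τ(μ) = μ, Σ_{i=0}^{p−1} τ^i(λ) = 0 and Σ_{i=0}^{p−1} σ^i(μ) = 0. Define A = Σ_{0 ≤ i < j ≤ p−2} ( τ^i(λ)·σ^j(μ) − τ^j(λ)·σ^i(μ) ). Then (τ∘σ)(A) = A. -/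
/-! Since `σ` fixes every `τ^i λ` and `τ` fixes every `σ^j μ`, the map `τσ` sends `τ^i λ` to
`τ^(i+1) λ` and `σ^j μ` to `σ^(j+1) μ`, so it shifts the triangle of indices of `A` by one.
The trace conditions make the edge sums that enter and leave the triangle vanish. -/

open Finset

/-- Both sides equal the sum over `1 ≤ i < j ≤ n - 1` plus a boundary sum; the vanishing
row and column sums (and the vanishing diagonal) make both boundary sums zero. -/
theorem sum_range_triangle_shift {M : Type*} [AddCommGroup M] (w : ℕ → ℕ → M) (n : ℕ)
    (hdiag : ∀ i, w i i = 0) (hrow : ∑ j ∈ range (n + 1), w 0 j = 0)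
    (hcol : ∑ i ∈ range (n + 1), w i n = 0) :
    ∑ j ∈ range n, ∑ i ∈ range j, w (i + 1) (j + 1) = ∑ j ∈ range n, ∑ i ∈ range j, w i j := by
  have hrow' : ∑ j ∈ range n, w 0 (j + 1) = 0 := by
    rwa [sum_range_succ', hdiag, add_zero] at hrow
  have hcol' : ∑ i ∈ range n, w i n = 0 := by
    rwa [sum_range_succ, hdiag, add_zero] at hcol
  have key : ∑ j ∈ range (n + 1), ∑ i ∈ range j, w i j =
      ∑ j ∈ range n, ∑ i ∈ range j, w (i + 1) (j + 1) + ∑ j ∈ range n, w 0 (j + 1) := by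
    simp only [sum_range_succ' _ n, sum_range_succ' (fun i => w i _), range_zero, sum_empty,
      add_zero, sum_add_distrib]
  rw [sum_range_succ, hcol', add_zero, hrow', add_zero] at key
  exact key.symm

theorem RingAut.mul_apply_pow_apply_of_apply_eq {R : Type*} [Mul R] [Add R] {σ τ : RingAut R}
    (hcomm : Commute σ τ) {x : R} (hx : σ x = x) (i : ℕ) :
    (τ * σ) ((τ ^ i) x) = (τ ^ (i + 1)) x := by
  rw [← RingAut.mul_apply, mul_assoc, (hcomm.pow_right i).eq, ← mul_assoc, ← pow_succ',
    RingAut.mul_apply, hx]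

theorem fixed_element_of_compositum_odd_general
    (p : ℕ) (R : Type*) [CommRing R]
    (σ τ : RingAut R) (hcomm : σ * τ = τ * σ)
    (lam mu : R) (hlam : σ lam = lam) (hmu : τ mu = mu)
    (htrlam : ∑ i ∈ range p, (τ ^ i) lam = 0)
    (htrmu : ∑ i ∈ range p, (σ ^ i) mu = 0) :
    (τ * σ) (∑ j ∈ range (p - 1), ∑ i ∈ range j,
        ((τ ^ i) lam * (σ ^ j) mu - (τ ^ j) lam * (σ ^ i) mu)) =
      ∑ j ∈ range (p - 1), ∑ i ∈ range j,
        ((τ ^ i) lam * (σ ^ j) mu - (τ ^ j) lam * (σ ^ i) mu) := by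
  obtain _ | n := p
  · simp
  have hshift_lam (i : ℕ) : (τ * σ) ((τ ^ i) lam) = (τ ^ (i + 1)) lam :=
    RingAut.mul_apply_pow_apply_of_apply_eq hcomm hlam i
  have hshift_mu (i : ℕ) : (τ * σ) ((σ ^ i) mu) = (σ ^ (i + 1)) mu := by
    rw [← hcomm]; exact RingAut.mul_apply_pow_apply_of_apply_eq hcomm.symm hmu i
  simp only [Nat.add_sub_cancel, map_sum, map_sub, map_mul, hshift_lam, hshift_mu]
  refine sum_range_triangle_shift (fun i j => (τ ^ i) lam * (σ ^ j) mu - (τ ^ j) lam * (σ ^ i) mu)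
    n (fun _ => sub_self _) ?_ ?_
  all_goals simp only [sum_sub_distrib, ← sum_mul, ← mul_sum, htrlam, htrmu, zero_mul, mul_zero,
    sub_self]

open Finset in
/-- Let `p` be an odd prime, `R` a commutative ring, and `σ, τ` commuting ring automorphisms
with `σ^p = τ^p = 1`. If `σ λ = λ`, `τ μ = μ`, and the "traces" `∑ τ^i λ` and `∑ σ^i μ`
vanish, then `A = ∑_{0 ≤ i < j ≤ p-2} (τ^i λ · σ^j μ − τ^j λ · σ^i μ)` is fixed by `τ ∘ σ`. -/
theorem fixed_element_of_compositum_odd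
    (p : ℕ) (hp : p.Prime) (hodd : Odd p) (R : Type*) [CommRing R]
    (σ τ : RingAut R) (hcomm : σ * τ = τ * σ)
    (hσ : σ ^ p = 1) (hτ : τ ^ p = 1)
    (lam mu : R) (hlam : σ lam = lam) (hmu : τ mu = mu)
    (htrlam : ∑ i ∈ range p, (τ ^ i) lam = 0)
    (htrmu : ∑ i ∈ range p, (σ ^ i) mu = 0) :
    (τ * σ) (∑ j ∈ range (p - 1), ∑ i ∈ range j,
        ((τ ^ i) lam * (σ ^ j) mu - (τ ^ j) lam * (σ ^ i) mu)) =
      ∑ j ∈ range (p - 1), ∑ i ∈ range j,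
        ((τ ^ i) lam * (σ ^ j) mu - (τ ^ j) lam * (σ ^ i) mu) :=
  fixed_element_of_compositum_odd_general p R σ τ hcomm lam mu hlam hmu htrlam htrmu
end

section
/- Let G be a C-group with C-tower (a_{n_k})_{k≥1}. Then for every k ≥ 2 the tower element a_{n_{k+1}} lies in γ_k(G) and is nontrivial; in particular every term γ_k(G) of the lower central series of G is nontrivial. -/
/-- The data of a `C`-group (for the prime `p`): an infinite pro-`p` group `G` together with
a strictly decreasing chain of open normal subgroups `G = chain 0 ⊋ chain 1 ⊋ ⋯` with trivial
intersection, each step of index `p` and `⁅G, chain i⁆ ⊆ chain (i+1)`; PC-generators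
`gen i ∈ chain (i-1) \ chain i` (for `i ≥ 1`) which topologically generate `G`; a sequence of
pairwise distinct indices `idx 1, idx 2, …` whose generators form a `C`-tower
(`gen (idx 3) = ⁅gen (idx 1), gen (idx 2)⁆` and `gen (idx (k+1)) = ⁅gen (idx k), gen (idx (k-1))⁆`
for `k ≥ 3`, where `⁅x, y⁆ = x⁻¹y⁻¹xy`); and such that the closed subgroup topologically
generated by the PC-generators not in the `C`-tower has trivial normal core. -/
structure CGroupData (p : ℕ) (G : Type*) [Group G] [TopologicalSpace G] [IsTopologicalGroup G] where
  chain : ℕ → Subgroup G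
  gen : ℕ → G
  idx : ℕ → ℕ
  chain_zero : chain 0 = ⊤
  chain_lt : ∀ i, chain (i + 1) < chain i
  chain_open : ∀ i, IsOpen (chain i : Set G)
  chain_normal : ∀ i, (chain i).Normal
  chain_iInf : ⨅ i, chain i = ⊥
  chain_index : ∀ i, (chain (i + 1)).relIndex (chain i) = p
  chain_comm : ∀ i, ∀ g : G, ∀ h ∈ chain i, g⁻¹ * h⁻¹ * g * h ∈ chain (i + 1)
  gen_mem : ∀ i, 1 ≤ i → gen i ∈ chain (i - 1)
  gen_not_mem : ∀ i, 1 ≤ i → gen i ∉ chain i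
  gen_top : (Subgroup.closure (Set.range fun i : ℕ => gen (i + 1))).topologicalClosure = ⊤
  idx_pos : ∀ k, 1 ≤ k → 1 ≤ idx k
  idx_inj : ∀ k l, 1 ≤ k → 1 ≤ l → idx k = idx l → k = l
  tower₃ : gen (idx 3) = (gen (idx 1))⁻¹ * (gen (idx 2))⁻¹ * gen (idx 1) * gen (idx 2)
  tower : ∀ k, 3 ≤ k →
    gen (idx (k + 1)) =
      (gen (idx k))⁻¹ * (gen (idx (k - 1)))⁻¹ * gen (idx k) * gen (idx (k - 1))
  core_trivial :
    (Subgroup.closure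
        {x : G | ∃ i, 1 ≤ i ∧ (∀ k, 1 ≤ k → idx k ≠ i) ∧ x = gen i}).topologicalClosure.normalCore
      = ⊥

/-!
Each tower element `a_{n_{k+1}}` is an iterated commutator of `k` tower elements, hence lies
in `γ_k(G)`; it is nontrivial because every PC-generator `a_i` lies outside `G_i`. Since the
lower central series is descending, `γ_k(G) ⊇ γ_{k+1}(G) ∋ a_{n_{k+2}} ≠ 1` for every `k`.
-/

open scoped commutatorElement

namespace Subgroup

variable {G : Type*} [Group G] {S : Subgroup G}

theorem inv_mul_inv_mul_mul_mem_lowerCentralSeries_succ {n : ℕ} {x y : G}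
    (hx : x ∈ S.lowerCentralSeries n) (hy : y ∈ S) :
    x⁻¹ * y⁻¹ * x * y ∈ S.lowerCentralSeries (n + 1) := by
  have hxy : x⁻¹ * y⁻¹ * x * y = ⁅x⁻¹, y⁻¹⁆ := by
    simp only [commutatorElement_def, inv_inv]
  rw [hxy, lowerCentralSeries_succ]
  exact commutator_mem_commutator (inv_mem hx) (inv_mem hy)

end Subgroup

namespace CGroupData

variable {p : ℕ} {G : Type*} [Group G] [TopologicalSpace G] [IsTopologicalGroup G]
  (D : CGroupData p G)

theorem gen_ne_one {i : ℕ} (hi : 1 ≤ i) : D.gen i ≠ 1 := fun h =>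
  D.gen_not_mem i hi (h ▸ (D.chain i).one_mem)

theorem gen_idx_ne_one {k : ℕ} (hk : 1 ≤ k) : D.gen (D.idx k) ≠ 1 :=
  D.gen_ne_one (D.idx_pos k hk)

theorem gen_idx_add_three_mem_lowerCentralSeries (m : ℕ) :
    D.gen (D.idx (m + 3)) ∈ (⊤ : Subgroup G).lowerCentralSeries (m + 1) := by
  induction m with
  | zero =>
    rw [D.tower₃]
    exact Subgroup.inv_mul_inv_mul_mul_mem_lowerCentralSeries_succ
      (Subgroup.mem_top _) (Subgroup.mem_top _)
  | succ m ih =>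
    rw [D.tower (m + 3) (by omega)]
    exact Subgroup.inv_mul_inv_mul_mul_mem_lowerCentralSeries_succ ih (Subgroup.mem_top _)

end CGroupData

theorem CGroup_lowerCentralSeries_nontrivial_general {p : ℕ} {G : Type*} [Group G]
    [TopologicalSpace G] [IsTopologicalGroup G]
    (D : CGroupData p G) :
    (∀ k : ℕ, 2 ≤ k →
      D.gen (D.idx (k + 1)) ∈ (⊤ : Subgroup G).lowerCentralSeries (k - 1) ∧
      D.gen (D.idx (k + 1)) ≠ 1) ∧
    (∀ k : ℕ, (⊤ : Subgroup G).lowerCentralSeries k ≠ ⊥) := by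
  refine ⟨fun k hk => ?_, fun k hbot => ?_⟩
  · obtain ⟨m, rfl⟩ : ∃ m, k = m + 2 := ⟨k - 2, by omega⟩
    exact ⟨D.gen_idx_add_three_mem_lowerCentralSeries m, D.gen_idx_ne_one (by omega)⟩
  · have hmem : D.gen (D.idx (k + 3)) ∈ (⊤ : Subgroup G).lowerCentralSeries k :=
      (⊤ : Subgroup G).lowerCentralSeries_antitone (Nat.le_succ k)
        (D.gen_idx_add_three_mem_lowerCentralSeries k)
    rw [hbot, Subgroup.mem_bot] at hmem
    exact D.gen_idx_ne_one (by omega) hmem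

/-- In a `C`-group with `C`-tower `(gen (idx k))`, for every `k ≥ 2` the tower element
`gen (idx (k + 1))` lies in `γ_k(G) = lowerCentralSeries G (k - 1)` and is nontrivial; in
particular every term of the lower central series of `G` is nontrivial. -/
theorem CGroup_lowerCentralSeries_nontrivial {p : ℕ} (hp : p.Prime) {G : Type*} [Group G]
    [TopologicalSpace G] [IsTopologicalGroup G] [CompactSpace G] [T2Space G]
    [TotallyDisconnectedSpace G] [Infinite G]
    (D : CGroupData p G) :
    (∀ k : ℕ, 2 ≤ k →
      D.gen (D.idx (k + 1)) ∈ (⊤ : Subgroup G).lowerCentralSeries (k - 1) ∧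
      D.gen (D.idx (k + 1)) ≠ 1) ∧
    (∀ k : ℕ, (⊤ : Subgroup G).lowerCentralSeries k ≠ ⊥) :=
  CGroup_lowerCentralSeries_nontrivial_general D
end
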